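/- For q ∈ ℂ (q-binomials well-defined), integers m, N ≥ 0 and complex a, p: q^{-N(m+1)} [N+m+1, m+1]_q · Σ_{K=0}^{N} (-1)^K q^{binom(K+1,2) - NK} [N K]_q · ((1-q^{m+1})/(1-q^{m+1+K})) · (a (pq)^{m+1} q^K; p)_N = (a p^{m+1}; p)_N, where (x;p)_N = ∏_{i=0}^{N-1}(1 - x p^i). Equivalently, D_{q,x}^N { (a(pq)^{m+1} x; p)_N / (1 - x q^{m+1}) } at x = 1 equals q^{N(m+1)} (a p^{m+1}; p)_N / ((1-q^{m+1}) [N+m+1, m+1]_q). -/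

import Mathlib

/-!
With `b = q^(m+1)`, `c = a p^(m+1)` and `F y = (c b y; p)_N / (1 - b y)`, iterating `qdiff` gives
`D_q^N F(1) = ∑ₖ (-1)ᵏ q^(k choose 2) [N k]_q (q/q^N)ᵏ F(qᵏ)`, so the sum in the first identity
is `(1 - b) D_q^N F(1)` and both identities say `D_q^N F(1) = b^N (q;q)_N (c;p)_N / (b;q)_{N+1}`.
As `(c y; p)_N` is a polynomial of degree `≤ N` in `y`, by linearity it suffices that
`D_q^n [yʲ/(1 - b y)](1) = b^(n-j) (q;q)_n / (b;q)_{n+1}` for `j ≤ n`. The left side is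
`R(q^(1+j-n))` with `R(w) = ∑ₖ (-1)ᵏ q^(k choose 2) [n k]_q wᵏ/(1 - b qᵏ)`. By the `q`-binomial
theorem `R(w) = (w;q)_n + b R(q w)`, and `(q^(1-t);q)_n = 0` for `1 ≤ t ≤ n`, so everything
reduces to `R(q) = (q;q)_n / (b;q)_{n+1}`, an induction on `n` via the Pascal rule.
-/

noncomputable def qpoch (a q : ℂ) (n : ℕ) : ℂ := ∏ i ∈ Finset.range n, (1 - a * q ^ i)

noncomputable def qbinom (q : ℂ) (n k : ℕ) : ℂ :=
  qpoch q q n / (qpoch q q k * qpoch q q (n - k))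

noncomputable def qdiff (q : ℂ) (F : ℂ → ℂ) : ℂ → ℂ := fun x => (F x - F (q * x)) / x

open Finset Polynomial

@[simp]
lemma qpoch_zero (a q : ℂ) : qpoch a q 0 = 1 := prod_range_zero _

lemma qpoch_succ (a q : ℂ) (n : ℕ) : qpoch a q (n + 1) = qpoch a q n * (1 - a * q ^ n) :=
  prod_range_succ _ _

lemma qpoch_add (a q : ℂ) (m n : ℕ) :
    qpoch a q (m + n) = qpoch a q m * qpoch (a * q ^ m) q n := by
  simp only [qpoch, prod_range_add, mul_assoc, pow_add]

lemma qpoch_succ' (a q : ℂ) (n : ℕ) : qpoch a q (n + 1) = (1 - a) * qpoch (a * q) q n := by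
  rw [add_comm, qpoch_add, pow_one, qpoch, prod_range_one, pow_zero, mul_one]

lemma qpoch_ne_zero {a q : ℂ} {n : ℕ} (h : ∀ i < n, a * q ^ i ≠ 1) : qpoch a q n ≠ 0 :=
  prod_ne_zero_iff.2 fun i hi => sub_ne_zero.2 (h i (mem_range.1 hi)).symm

lemma qpoch_eq_zero {a q : ℂ} {n i : ℕ} (hi : i < n) (h : a * q ^ i = 1) : qpoch a q n = 0 :=
  prod_eq_zero (mem_range.2 hi) (by rw [h, sub_self])

/-- The Gaussian binomial coefficient via the Pascal rule: unlike `qbinom`, it is meaningful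
without any nonvanishing hypothesis (compare `gaussBinom_eq_qbinom`). -/
noncomputable def gaussBinom (q : ℂ) : ℕ → ℕ → ℂ
  | _, 0 => 1
  | 0, _ + 1 => 0
  | n + 1, k + 1 => gaussBinom q n (k + 1) + q ^ (n - k) * gaussBinom q n k

@[simp]
lemma gaussBinom_zero_right (q : ℂ) (n : ℕ) : gaussBinom q n 0 = 1 := by
  cases n <;> rfl

lemma gaussBinom_succ_succ (q : ℂ) (n k : ℕ) :
    gaussBinom q (n + 1) (k + 1) = gaussBinom q n (k + 1) + q ^ (n - k) * gaussBinom q n k :=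
  rfl

lemma gaussBinom_eq_zero_of_lt (q : ℂ) {n k : ℕ} (h : n < k) : gaussBinom q n k = 0 := by
  induction n generalizing k with
  | zero => obtain ⟨k, rfl⟩ := Nat.exists_eq_add_one_of_ne_zero (by omega : k ≠ 0); rfl
  | succ n ih =>
    obtain ⟨k, rfl⟩ := Nat.exists_eq_add_one_of_ne_zero (by omega : k ≠ 0)
    rw [gaussBinom_succ_succ, ih (by omega), ih (by omega), mul_zero, add_zero]

@[simp]
lemma gaussBinom_self (q : ℂ) (n : ℕ) : gaussBinom q n n = 1 := by
  induction n with
  | zero => rfl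
  | succ n ih => rw [gaussBinom_succ_succ, gaussBinom_eq_zero_of_lt q n.lt_succ_self, ih]; simp

lemma gaussBinom_mul_qpoch_mul_qpoch (q : ℂ) {n k : ℕ} (hk : k ≤ n) :
    gaussBinom q n k * qpoch q q k * qpoch q q (n - k) = qpoch q q n := by
  induction n generalizing k with
  | zero =>
    obtain rfl : k = 0 := by omega
    simp
  | succ n ih =>
    rcases k with _ | k
    · simp
    rcases (Nat.le_of_succ_le_succ hk).eq_or_lt with rfl | hlt
    · simp
    obtain ⟨d, rfl⟩ : ∃ d, n = k + 1 + d := ⟨n - (k + 1), by omega⟩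
    have h₁ := ih (k := k + 1) (by omega)
    have h₂ := ih (k := k) (by omega)
    rw [show k + 1 + d - (k + 1) = d by omega, qpoch_succ q q k] at h₁
    rw [show k + 1 + d - k = d + 1 by omega, qpoch_succ q q d] at h₂
    rw [show k + 1 + d + 1 - (k + 1) = d + 1 by omega, gaussBinom_succ_succ,
      show k + 1 + d - k = d + 1 by omega, qpoch_succ q q d, qpoch_succ q q k,
      qpoch_succ q q (k + 1 + d)]
    linear_combination (1 - q * q ^ d) * h₁ + q ^ (d + 1) * (1 - q * q ^ k) * h₂

lemma gaussBinom_eq_qbinom {q : ℂ} {n k : ℕ} (hk : k ≤ n) (h₁ : qpoch q q k ≠ 0)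
    (h₂ : qpoch q q (n - k) ≠ 0) : gaussBinom q n k = qbinom q n k := by
  rw [qbinom, eq_div_iff (mul_ne_zero h₁ h₂), ← mul_assoc, gaussBinom_mul_qpoch_mul_qpoch q hk]

lemma Nat.add_one_choose_two (k : ℕ) : (k + 1).choose 2 = k.choose 2 + k := by
  rw [Nat.choose_succ_succ' k 1, Nat.choose_one_right, add_comm]

noncomputable def qbinomAltSum (q : ℂ) (n : ℕ) (f : ℕ → ℂ) : ℂ :=
  ∑ k ∈ range (n + 1), (-1) ^ k * q ^ k.choose 2 * gaussBinom q n k * f k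

@[simp]
lemma qbinomAltSum_zero (q : ℂ) (f : ℕ → ℂ) : qbinomAltSum q 0 f = f 0 := by
  simp [qbinomAltSum]

lemma qbinomAltSum_succ (q : ℂ) (n : ℕ) (f : ℕ → ℂ) :
    qbinomAltSum q (n + 1) f =
      qbinomAltSum q n f - q ^ n * qbinomAltSum q n (fun k => f (k + 1)) := by
  set u : ℕ → ℂ := fun k => (-1) ^ k * q ^ k.choose 2 * gaussBinom q n k * f k
  have hu : qbinomAltSum q n f = ∑ k ∈ range (n + 1), u (k + 1) + u 0 := by
    change ∑ k ∈ range (n + 1), u k = _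
    rw [← sum_range_succ', sum_range_succ u (n + 1)]
    simp [u, gaussBinom_eq_zero_of_lt q n.lt_succ_self]
  rw [hu, qbinomAltSum, qbinomAltSum, sum_range_succ', mul_sum, add_sub_right_comm,
    ← sum_sub_distrib]
  congr 1
  · refine sum_congr rfl fun k hk => ?_
    have hkn : k ≤ n := Nat.lt_succ_iff.1 (mem_range.1 hk)
    have hpow : q ^ (k + 1).choose 2 * q ^ (n - k) = q ^ n * q ^ k.choose 2 := by
      rw [← pow_add, ← pow_add, Nat.add_one_choose_two]
      exact congrArg _ (by omega)
    simp only [u, gaussBinom_succ_succ, pow_succ]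
    linear_combination -(-1) ^ k * gaussBinom q n k * f (k + 1) * hpow
  · simp [u]

lemma qbinomAltSum_const_mul (q c : ℂ) (n : ℕ) (f : ℕ → ℂ) :
    qbinomAltSum q n (fun k => c * f k) = c * qbinomAltSum q n f := by
  simp only [qbinomAltSum, mul_sum]
  exact sum_congr rfl fun _ _ => by ring

lemma qbinomAltSum_sub (q : ℂ) (n : ℕ) (f g : ℕ → ℂ) :
    qbinomAltSum q n (fun k => f k - g k) = qbinomAltSum q n f - qbinomAltSum q n g := by
  simp only [qbinomAltSum, ← sum_sub_distrib]
  exact sum_congr rfl fun _ _ => by ring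

theorem qpoch_eq_qbinomAltSum (z q : ℂ) (n : ℕ) :
    qpoch z q n = qbinomAltSum q n (fun k => z ^ k) := by
  induction n with
  | zero => simp
  | succ n ih =>
    simp only [qbinomAltSum_succ, pow_succ', qbinomAltSum_const_mul, ← ih, qpoch_succ]
    ring

lemma iterate_qdiff_apply_one {q : ℂ} (hq : q ≠ 0) (n : ℕ) (F : ℂ → ℂ) :
    (qdiff q)^[n] F 1 = qbinomAltSum q n (fun k => (q / q ^ n) ^ k * F (q ^ k)) := by
  induction n generalizing F with
  | zero => simp
  | succ n ih =>
    have hshift : q ^ n * (q / q ^ (n + 1)) = 1 := by rw [pow_succ]; field_simp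
    set w := q / q ^ (n + 1)
    rw [Function.iterate_succ_apply, ih, qbinomAltSum_succ, ← qbinomAltSum_const_mul,
      ← qbinomAltSum_sub]
    refine congrArg _ (funext fun k => ?_)
    have hw : (q / q ^ n) ^ k / q ^ k = w ^ k := by rw [← div_pow, div_div, ← pow_succ]
    simp only [qdiff, ← pow_succ']
    linear_combination (F (q ^ k) - F (q ^ (k + 1))) * hw + w ^ k * F (q ^ (k + 1)) * hshift

section

variable {q b : ℂ} {n : ℕ}

lemma qbinomAltSum_pow_div_one_sub (hb : ∀ k ≤ n, b * q ^ k ≠ 1) (w : ℂ) :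
    qbinomAltSum q n (fun k => w ^ k / (1 - b * q ^ k)) =
      qpoch w q n + b * qbinomAltSum q n (fun k => (q * w) ^ k / (1 - b * q ^ k)) := by
  rw [qpoch_eq_qbinomAltSum]
  simp only [qbinomAltSum, mul_sum, ← sum_add_distrib]
  refine sum_congr rfl fun k hk => ?_
  have : 1 - b * q ^ k ≠ 0 := sub_ne_zero.2 (hb k (Nat.lt_succ_iff.1 (mem_range.1 hk))).symm
  field_simp
  ring

lemma qbinomAltSum_self_pow_div_one_sub (hb : ∀ k ≤ n, b * q ^ k ≠ 1) :
    qbinomAltSum q n (fun k => q ^ k / (1 - b * q ^ k)) = qpoch q q n / qpoch b q (n + 1) := by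
  induction n generalizing b with
  | zero => simp [qpoch_succ]
  | succ n ih =>
    have hbq : ∀ k ≤ n, b * q * q ^ k ≠ 1 := fun k hk => by
      rw [mul_assoc, ← pow_succ']; exact hb (k + 1) (by omega)
    have hshift : (fun k => q ^ (k + 1) / (1 - b * q ^ (k + 1))) =
        fun k => q * (q ^ k / (1 - b * q * q ^ k)) := by
      funext k; rw [pow_succ', mul_assoc, mul_div_assoc]
    rw [qbinomAltSum_succ, hshift, qbinomAltSum_const_mul, ih fun k hk => hb k (by omega), ih hbq]
    have hX : qpoch b q (n + 1) ≠ 0 := qpoch_ne_zero fun i hi => hb i (by omega)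
    have hY : qpoch (b * q) q (n + 1) ≠ 0 := qpoch_ne_zero fun i hi => hbq i (by omega)
    have hlast : 1 - b * q ^ (n + 1) ≠ 0 := sub_ne_zero.2 (hb (n + 1) le_rfl).symm
    have hXY :
        qpoch b q (n + 1) * (1 - b * q ^ (n + 1)) = (1 - b) * qpoch (b * q) q (n + 1) := by
      rw [← qpoch_succ, qpoch_succ']
    rw [qpoch_succ b q (n + 1), qpoch_succ q q n]
    generalize qpoch b q (n + 1) = X at *
    generalize qpoch (b * q) q (n + 1) = Y at *
    field_simp
    linear_combination (-q ^ (n + 1) * qpoch q q n) * hXY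

lemma qbinomAltSum_div_pow_div_one_sub (hq : q ≠ 0) (hb : ∀ k ≤ n, b * q ^ k ≠ 1) {t : ℕ}
    (ht : t ≤ n) :
    qbinomAltSum q n (fun k => (q / q ^ t) ^ k / (1 - b * q ^ k)) =
      b ^ t * qpoch q q n / qpoch b q (n + 1) := by
  induction t with
  | zero => simpa using qbinomAltSum_self_pow_div_one_sub hb
  | succ t ih =>
    rw [qbinomAltSum_pow_div_one_sub hb,
      qpoch_eq_zero (i := t) (by omega) (by rw [pow_succ]; field_simp),
      show q * (q / q ^ (t + 1)) = q / q ^ t by rw [pow_succ]; field_simp, ih (by omega)]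
    ring

noncomputable def qdiffLinearMap (q : ℂ) : Module.End ℂ (ℂ → ℂ) where
  toFun := qdiff q
  map_add' F G := funext fun x => by simp only [qdiff, Pi.add_apply]; ring
  map_smul' c F := funext fun x => by
    simp only [qdiff, Pi.smul_apply, smul_eq_mul, RingHom.id_apply]; ring

lemma iterate_qdiff_eq_pow (q : ℂ) (n : ℕ) : (qdiff q)^[n] = ⇑(qdiffLinearMap q ^ n) :=
  (Module.End.coe_pow (qdiffLinearMap q) n).symm

lemma iterate_qdiff_pow_div_one_sub_apply_one (hq : q ≠ 0) (hb : ∀ k ≤ n, b * q ^ k ≠ 1)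
    {j : ℕ} (hj : j ≤ n) :
    (qdiff q)^[n] (fun y => y ^ j / (1 - b * y)) 1 =
      b ^ (n - j) * qpoch q q n / qpoch b q (n + 1) := by
  rw [iterate_qdiff_apply_one hq, ← qbinomAltSum_div_pow_div_one_sub hq hb (Nat.sub_le n j)]
  have hw : q / q ^ n * q ^ j = q / q ^ (n - j) := by
    rw [← pow_sub_mul_pow q hj]; field_simp
  refine congrArg _ (funext fun k => ?_)
  rw [← hw, mul_pow, ← pow_mul, ← pow_mul, mul_comm j k]
  ring

noncomputable def qpochPoly (a p : ℂ) (n : ℕ) : ℂ[X] := ∏ i ∈ range n, (1 - C (a * p ^ i) * X)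

lemma eval_qpochPoly (a p y : ℂ) (n : ℕ) : (qpochPoly a p n).eval y = qpoch (a * y) p n := by
  simp only [qpochPoly, qpoch, eval_prod, eval_sub, eval_one, eval_mul, eval_C, eval_X]
  exact prod_congr rfl fun i _ => by ring

lemma natDegree_qpochPoly_le (a p : ℂ) (n : ℕ) : (qpochPoly a p n).natDegree ≤ n := by
  have hfactor (i : ℕ) : (1 - C (a * p ^ i) * X).natDegree ≤ 1 :=
    (natDegree_sub_le _ _).trans
      (max_le (natDegree_one.trans_le zero_le_one)
        ((natDegree_C_mul_le _ _).trans natDegree_X_le))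
  refine (natDegree_prod_le _ _).trans ?_
  simpa using sum_le_sum fun i (_ : i ∈ range n) => hfactor i

theorem iterate_qdiff_eval_div_one_sub_apply_one (hq : q ≠ 0) (hb : ∀ k ≤ n, b * q ^ k ≠ 1)
    {P : ℂ[X]} (hP : P.natDegree ≤ n) :
    (qdiff q)^[n] (fun y => P.eval (b * y) / (1 - b * y)) 1 =
      b ^ n * qpoch q q n * P.eval 1 / qpoch b q (n + 1) := by
  have hlt : P.natDegree < n + 1 := Nat.lt_succ_of_le hP
  have hexpand : (fun y => P.eval (b * y) / (1 - b * y)) =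
      ∑ j ∈ range (n + 1), (P.coeff j * b ^ j) • fun y => y ^ j / (1 - b * y) := by
    funext y
    rw [eval_eq_sum_range' hlt, sum_div, Finset.sum_apply]
    refine sum_congr rfl fun j _ => ?_
    simp only [Pi.smul_apply, smul_eq_mul]
    ring
  rw [hexpand, iterate_qdiff_eq_pow, map_sum, Finset.sum_apply,
    eval_eq_sum_range' hlt, mul_sum, sum_div]
  refine sum_congr rfl fun j hj => ?_
  have hjn : j ≤ n := Nat.lt_succ_iff.1 (mem_range.1 hj)
  rw [map_smul, Pi.smul_apply, smul_eq_mul, ← iterate_qdiff_eq_pow,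
    iterate_qdiff_pow_div_one_sub_apply_one hq hb hjn, one_pow, mul_one, ← pow_sub_mul_pow b hjn]
  ring

theorem iterate_qdiff_qpoch_div_one_sub_apply_one (hq : q ≠ 0) (hb : ∀ k ≤ n, b * q ^ k ≠ 1)
    (c p : ℂ) :
    (qdiff q)^[n] (fun y => qpoch (c * b * y) p n / (1 - y * b)) 1 =
      b ^ n * qpoch q q n * qpoch c p n / qpoch b q (n + 1) := by
  have hF : (fun y => qpoch (c * b * y) p n / (1 - y * b)) =
      fun y => (qpochPoly c p n).eval (b * y) / (1 - b * y) := by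
    funext y; rw [eval_qpochPoly, mul_assoc, mul_comm y]
  rw [hF, iterate_qdiff_eval_div_one_sub_apply_one hq hb (natDegree_qpochPoly_le c p n),
    eval_qpochPoly, mul_one]

end

lemma qbinom_add_mul_qpoch_mul_one_sub {q : ℂ} {n k : ℕ} (hk : qpoch q q k ≠ 0)
    (hn : qpoch q q n ≠ 0) :
    qbinom q (n + k) k * qpoch q q n * (1 - q ^ k) = qpoch (q ^ k) q (n + 1) := by
  rw [qbinom, Nat.add_sub_cancel, add_comm n k, qpoch_add, qpoch_succ', ← pow_succ, ← pow_succ']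
  field_simp

lemma zpow_triangle_sub_mul {q : ℂ} (hq : q ≠ 0) (n k : ℕ) :
    q ^ (((k * (k + 1) / 2 : ℕ) : ℤ) - n * k) = q ^ k.choose 2 * (q / q ^ n) ^ k := by
  have htri : k * (k + 1) / 2 = k.choose 2 + k := by
    rw [← Nat.add_one_choose_two, Nat.choose_two_right, Nat.add_sub_cancel, mul_comm]
  rw [zpow_sub₀ hq, htri, ← Nat.cast_mul, zpow_natCast, zpow_natCast, pow_add, div_pow,
    ← pow_mul]
  ring

lemma one_sub_mul_iterate_qdiff_div_one_sub_apply_one {q : ℂ} (hq : q ≠ 0) {n : ℕ}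
    (hpoch : ∀ k ≤ n, qpoch q q k ≠ 0) (b : ℂ) (G : ℂ → ℂ) :
    (1 - b) * (qdiff q)^[n] (fun y => G y / (1 - y * b)) 1 =
      ∑ k ∈ range (n + 1), (-1) ^ k * q ^ (((k * (k + 1) / 2 : ℕ) : ℤ) - n * k) *
        qbinom q n k * ((1 - b) / (1 - b * q ^ k)) * G (q ^ k) := by
  rw [iterate_qdiff_apply_one hq, qbinomAltSum, mul_sum]
  refine sum_congr rfl fun k hk => ?_
  have hkn : k ≤ n := Nat.lt_succ_iff.1 (mem_range.1 hk)
  rw [← gaussBinom_eq_qbinom hkn (hpoch k hkn) (hpoch (n - k) (Nat.sub_le n k)),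
    zpow_triangle_sub_mul hq, mul_comm b]
  ring

theorem bibasic_terminating_identity (q p a : ℂ) (hq : q ≠ 0) (m N : ℕ)
    (hq1 : ∀ K ≤ N, q ^ (m + 1 + K) ≠ 1)
    (hpoch : ∀ k ≤ N + m + 1, qpoch q q k ≠ 0) :
    (q ^ (-((N * (m + 1) : ℕ) : ℤ)) * qbinom q (N + m + 1) (m + 1) *
        ∑ K ∈ Finset.range (N + 1),
          (-1) ^ K * q ^ (((K * (K + 1) / 2 : ℕ) : ℤ) - (N : ℤ) * (K : ℤ)) *
            qbinom q N K * ((1 - q ^ (m + 1)) / (1 - q ^ (m + 1 + K))) *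
            qpoch (a * (p * q) ^ (m + 1) * q ^ K) p N =
      qpoch (a * p ^ (m + 1)) p N) ∧
    (qdiff q)^[N]
        (fun y => qpoch (a * (p * q) ^ (m + 1) * y) p N / (1 - y * q ^ (m + 1))) 1 =
      q ^ (N * (m + 1)) * qpoch (a * p ^ (m + 1)) p N /
        ((1 - q ^ (m + 1)) * qbinom q (N + m + 1) (m + 1)) := by
  have hb : ∀ k ≤ N, q ^ (m + 1) * q ^ k ≠ 1 := fun k hk => by rw [← pow_add]; exact hq1 k hk
  have hD := iterate_qdiff_qpoch_div_one_sub_apply_one hq hb (a * p ^ (m + 1)) p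
  have hB := qbinom_add_mul_qpoch_mul_one_sub (hpoch (m + 1) (by omega)) (hpoch N (by omega))
  have hX : qpoch (q ^ (m + 1)) q (N + 1) ≠ 0 := qpoch_ne_zero fun i hi => hb i (by omega)
  rw [← add_assoc] at hB
  rw [mul_assoc a, ← mul_pow, ← hB] at hD
  rw [← hB] at hX
  have hQ : qpoch q q N ≠ 0 := hpoch N (by omega)
  have hB0 : qbinom q (N + m + 1) (m + 1) ≠ 0 := left_ne_zero_of_mul (left_ne_zero_of_mul hX)
  have h1b : 1 - q ^ (m + 1) ≠ 0 := right_ne_zero_of_mul hX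
  simp only [pow_add q (m + 1)]
  rw [← one_sub_mul_iterate_qdiff_div_one_sub_apply_one hq (fun k hk => hpoch k (by omega))
    (q ^ (m + 1)) (fun y => qpoch (a * (p * q) ^ (m + 1) * y) p N), hD, zpow_neg, zpow_natCast,
    pow_mul']
  constructor <;> field_simp
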